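/- Let A_1,…,A_n ∈ ℂ^{n1×n2} satisfy: (i) every nonzero entry of A_k equals ‖A_k‖₀^{−1/2}, where ‖A_k‖₀ is the number of nonzero entries of A_k; (ii) each row and each column of each A_k has at most one nonzero entry; (iii) the supports of distinct A_k are pairwise disjoint and their union is all of {1,…,n1}×{1,…,n2}; (iv) ‖A_k‖₀ = min(n1,n2) for every k. Then for every M ∈ ℂ^{n1×n2}, ∑_{k=1}^n |⟨A_k, M⟩|²·‖A_k‖² ≤ max( max_{1≤i≤n1} ‖e_iᴴ M‖₂², max_{1≤j≤n2} ‖M e_j‖₂² ), where ‖A_k‖ is the spectral norm of A_k. -/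

import Mathlib

open Matrix

/-- Frobenius inner product `⟨A,B⟩ = Tr(AᴴB)`. -/
noncomputable def frobInner {m n : ℕ} (A B : Matrix (Fin m) (Fin n) ℂ) : ℂ :=
  (Aᴴ * B).trace

/-- Spectral norm (largest singular value). -/
noncomputable def specNorm {m n : ℕ} (A : Matrix (Fin m) (Fin n) ℂ) : ℝ :=
  ‖LinearMap.toContinuousLinearMap (Matrix.toEuclideanLin A)‖

/-- Number of nonzero entries `‖B‖₀`. -/
noncomputable def nnz {n1 n2 : ℕ} (B : Matrix (Fin n1) (Fin n2) ℂ) : ℕ :=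
  {ij : Fin n1 × Fin n2 | B ij.1 ij.2 ≠ 0}.ncard

/-!
Each `A_k` is a scaled partial permutation matrix with entries `s^{-1/2}`, `s = min n1 n2`, so
`‖A_k‖ ≤ s^{-1/2}`, and Cauchy–Schwarz over its `s` nonzero entries gives
`|⟨A_k, M⟩|² ≤ ∑_{supp A_k} |M_ij|²`. Hence the `k`-th term is at most `s⁻¹ ∑_{supp A_k} |M_ij|²`.
The supports are disjoint, so the sum is at most `s⁻¹ ‖M‖_F²`, and `‖M‖_F²` is at most `n1` times
the largest squared row norm and `n2` times the largest squared column norm.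
-/

open Finset

section

variable {m n : ℕ}

noncomputable def entrySupport (B : Matrix (Fin m) (Fin n) ℂ) : Finset (Fin m × Fin n) :=
  {ij | B ij.1 ij.2 ≠ 0}

lemma nnz_eq_card_entrySupport (B : Matrix (Fin m) (Fin n) ℂ) : nnz B = #(entrySupport B) := by
  rw [nnz, entrySupport, ← Set.ncard_coe_finset, coe_filter]
  simp

lemma sum_entrySupport_eq_sum_sum_filter (B : Matrix (Fin m) (Fin n) ℂ) (f : Fin m × Fin n → ℝ) :
    ∑ ij ∈ entrySupport B, f ij = ∑ i, ∑ j ∈ {j | B i j ≠ 0}, f (i, j) := by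
  simp only [entrySupport, sum_filter, Fintype.sum_prod_type]

lemma norm_sum_sq_le_card_mul {ι E : Type*} [SeminormedAddCommGroup E] (s : Finset ι)
    (f : ι → E) : ‖∑ i ∈ s, f i‖ ^ 2 ≤ #s * ∑ i ∈ s, ‖f i‖ ^ 2 :=
  (pow_le_pow_left₀ (norm_nonneg _) (norm_sum_le s f) 2).trans sq_sum_le_card_mul_sum_sq

lemma frobInner_eq_sum_entrySupport (A M : Matrix (Fin m) (Fin n) ℂ) :
    frobInner A M = ∑ ij ∈ entrySupport A, star (A ij.1 ij.2) * M ij.1 ij.2 := by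
  have hsupp : ∀ ij ∈ (univ : Finset (Fin m × Fin n)),
      star (A ij.1 ij.2) * M ij.1 ij.2 ≠ 0 → A ij.1 ij.2 ≠ 0 := fun ij _ h hA => h (by simp [hA])
  rw [entrySupport, sum_filter_of_ne hsupp, Fintype.sum_prod_type, frobInner, trace, sum_comm]
  simp [mul_apply]

lemma norm_frobInner_sq_le {A : Matrix (Fin m) (Fin n) ℂ} {c : ℝ} (hA : ∀ i j, ‖A i j‖ ≤ c)
    (M : Matrix (Fin m) (Fin n) ℂ) :
    ‖frobInner A M‖ ^ 2 ≤ c ^ 2 * nnz A * ∑ ij ∈ entrySupport A, ‖M ij.1 ij.2‖ ^ 2 := by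
  rw [frobInner_eq_sum_entrySupport, nnz_eq_card_entrySupport, mul_comm (c ^ 2), mul_assoc,
    mul_sum]
  refine (norm_sum_sq_le_card_mul _ _).trans ?_
  gcongr with ij
  rw [norm_mul, norm_star, mul_pow]
  gcongr
  exact hA ij.1 ij.2

lemma norm_mulVec_apply_sq_le {B : Matrix (Fin m) (Fin n) ℂ} {c : ℝ} (hB : ∀ i j, ‖B i j‖ ≤ c)
    (hrow : ∀ i j j', B i j ≠ 0 → B i j' ≠ 0 → j = j') (v : Fin n → ℂ) (i : Fin m) :
    ‖(B *ᵥ v) i‖ ^ 2 ≤ ∑ j ∈ {j | B i j ≠ 0}, c ^ 2 * ‖v j‖ ^ 2 := by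
  have hcard : #{j | B i j ≠ 0} ≤ 1 := card_le_one.mpr fun j hj j' hj' =>
    hrow i j j' (mem_filter.mp hj).2 (mem_filter.mp hj').2
  have hsupp : ∀ j ∈ (univ : Finset (Fin n)), B i j * v j ≠ 0 → B i j ≠ 0 :=
    fun j _ h hB => h (by simp [hB])
  calc ‖(B *ᵥ v) i‖ ^ 2
      ≤ #{j | B i j ≠ 0} * ∑ j ∈ {j | B i j ≠ 0}, ‖B i j * v j‖ ^ 2 := by
        rw [mulVec, dotProduct, ← sum_filter_of_ne hsupp]
        exact norm_sum_sq_le_card_mul _ _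
    _ ≤ 1 * ∑ j ∈ {j | B i j ≠ 0}, c ^ 2 * ‖v j‖ ^ 2 := by
        gcongr with j
        · exact_mod_cast hcard
        · rw [norm_mul, mul_pow]
          gcongr
          exact hB i j
    _ = ∑ j ∈ {j | B i j ≠ 0}, c ^ 2 * ‖v j‖ ^ 2 := one_mul _

lemma sum_entrySupport_le_sum_snd {B : Matrix (Fin m) (Fin n) ℂ}
    (hcol : ∀ i i' j, B i j ≠ 0 → B i' j ≠ 0 → i = i') {f : Fin n → ℝ} (hf : ∀ j, 0 ≤ f j) :
    ∑ ij ∈ entrySupport B, f ij.2 ≤ ∑ j, f j := by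
  have hinj : Set.InjOn Prod.snd (entrySupport B : Set (Fin m × Fin n)) :=
    fun ij hij ij' hij' h => by
      simp only [entrySupport, mem_coe, mem_filter, mem_univ, true_and] at hij hij'
      exact Prod.ext (hcol ij.1 ij'.1 ij.2 hij (h ▸ hij')) h
  rw [← sum_image hinj]
  exact sum_le_univ_sum_of_nonneg hf

lemma specNorm_le_of_partialPerm {B : Matrix (Fin m) (Fin n) ℂ} {c : ℝ} (hc : 0 ≤ c)
    (hB : ∀ i j, ‖B i j‖ ≤ c)
    (hrow : ∀ i j j', B i j ≠ 0 → B i j' ≠ 0 → j = j')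
    (hcol : ∀ i i' j, B i j ≠ 0 → B i' j ≠ 0 → i = i') :
    specNorm B ≤ c := by
  refine ContinuousLinearMap.opNorm_le_bound _ hc fun x => ?_
  refine (pow_le_pow_iff_left₀ (norm_nonneg _) (by positivity) two_ne_zero).mp ?_
  calc ‖toEuclideanLin B x‖ ^ 2 = ∑ i, ‖(B *ᵥ x.ofLp) i‖ ^ 2 :=
        EuclideanSpace.norm_sq_eq (toEuclideanLin B x)
    _ ≤ ∑ i, ∑ j ∈ {j | B i j ≠ 0}, c ^ 2 * ‖x j‖ ^ 2 :=
        sum_le_sum fun i _ => norm_mulVec_apply_sq_le hB hrow x.ofLp i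
    _ = ∑ ij ∈ entrySupport B, c ^ 2 * ‖x ij.2‖ ^ 2 :=
        (sum_entrySupport_eq_sum_sum_filter B fun ij => c ^ 2 * ‖x ij.2‖ ^ 2).symm
    _ ≤ ∑ j, c ^ 2 * ‖x j‖ ^ 2 :=
        sum_entrySupport_le_sum_snd hcol (f := fun j => c ^ 2 * ‖x j‖ ^ 2) fun j => by positivity
    _ = (c * ‖x‖) ^ 2 := by rw [← mul_sum, mul_pow, EuclideanSpace.norm_sq_eq]

lemma norm_frobInner_sq_mul_specNorm_sq_le {B : Matrix (Fin m) (Fin n) ℂ}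
    (hval : ∀ i j, B i j ≠ 0 → B i j = (((Real.sqrt (nnz B))⁻¹ : ℝ) : ℂ))
    (hrow : ∀ i j j', B i j ≠ 0 → B i j' ≠ 0 → j = j')
    (hcol : ∀ i i' j, B i j ≠ 0 → B i' j ≠ 0 → i = i') (M : Matrix (Fin m) (Fin n) ℂ) :
    ‖frobInner B M‖ ^ 2 * specNorm B ^ 2 ≤
      (nnz B : ℝ)⁻¹ * ∑ ij ∈ entrySupport B, ‖M ij.1 ij.2‖ ^ 2 := by
  set c : ℝ := (Real.sqrt (nnz B))⁻¹
  have hc : 0 ≤ c := by positivity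
  have hc2 : c ^ 2 = (nnz B : ℝ)⁻¹ := by
    rw [inv_pow, Real.sq_sqrt (Nat.cast_nonneg _)]
  have hB : ∀ i j, ‖B i j‖ ≤ c := fun i j => by
    by_cases h : B i j = 0
    · simpa [h] using hc
    · rw [hval i j h, Complex.norm_real, Real.norm_of_nonneg hc]
  have hspec : specNorm B ^ 2 ≤ c ^ 2 :=
    pow_le_pow_left₀ (norm_nonneg _) (specNorm_le_of_partialPerm hc hB hrow hcol) 2
  calc ‖frobInner B M‖ ^ 2 * specNorm B ^ 2
      ≤ (c ^ 2 * nnz B * ∑ ij ∈ entrySupport B, ‖M ij.1 ij.2‖ ^ 2) * c ^ 2 := by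
        gcongr
        exact norm_frobInner_sq_le hB M
    _ = (nnz B : ℝ)⁻¹ * ∑ ij ∈ entrySupport B, ‖M ij.1 ij.2‖ ^ 2 := by
        rw [hc2, mul_comm _ ((nnz B : ℝ)⁻¹), ← mul_assoc, ← mul_assoc]
        congr 1
        simpa using mul_self_mul_inv (nnz B : ℝ)⁻¹

lemma sum_le_card_mul_iSup {ι : Type*} [Fintype ι] (f : ι → ℝ) :
    ∑ i, f i ≤ Fintype.card ι * ⨆ i, f i := by
  simpa using sum_le_card_nsmul univ f _ fun i _ => le_ciSup (Set.finite_range f).bddAbove i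

lemma sum_norm_sq_le_min_mul_max (M : Matrix (Fin m) (Fin n) ℂ) :
    ∑ ij : Fin m × Fin n, ‖M ij.1 ij.2‖ ^ 2 ≤
      min m n * max (⨆ i, ∑ j, ‖M i j‖ ^ 2) (⨆ j, ∑ i, ‖M i j‖ ^ 2) := by
  rw [Fintype.sum_prod_type]
  rcases le_total m n with h | h
  · rw [min_eq_left h]
    refine (sum_le_card_mul_iSup _).trans ?_
    rw [Fintype.card_fin]
    gcongr
    exact le_max_left _ _
  · rw [min_eq_right h, sum_comm]
    refine (sum_le_card_mul_iSup _).trans ?_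
    rw [Fintype.card_fin]
    gcongr
    exact le_max_right _ _

end

theorem wraparound_basis_A2_norm_bound_general
    (n1 n2 n : ℕ)
    (A : Fin n → Matrix (Fin n1) (Fin n2) ℂ)
    (hval : ∀ k i j, A k i j ≠ 0 → A k i j = (((Real.sqrt (nnz (A k)))⁻¹ : ℝ) : ℂ))
    (hrow : ∀ k i j j', A k i j ≠ 0 → A k i j' ≠ 0 → j = j')
    (hcol : ∀ k i i' j, A k i j ≠ 0 → A k i' j ≠ 0 → i = i')
    (hdisj : ∀ k k' i j, A k i j ≠ 0 → A k' i j ≠ 0 → k = k')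
    (hwrap : ∀ k, nnz (A k) = min n1 n2) :
    ∀ M : Matrix (Fin n1) (Fin n2) ℂ,
      ∑ k, ‖frobInner (A k) M‖ ^ 2 * specNorm (A k) ^ 2 ≤
        max (⨆ i, ∑ j, ‖M i j‖ ^ 2) (⨆ j, ∑ i, ‖M i j‖ ^ 2) := by
  intro M
  set s : ℝ := ((min n1 n2 : ℕ) : ℝ)
  set R := max (⨆ i, ∑ j, ‖M i j‖ ^ 2) (⨆ j, ∑ i, ‖M i j‖ ^ 2)
  have hR : 0 ≤ R := le_max_of_le_left (Real.iSup_nonneg fun i => by positivity)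
  have hsupp : Set.PairwiseDisjoint ↑(univ : Finset (Fin n)) (fun k => entrySupport (A k)) :=
    fun k _ k' _ hk => disjoint_left.mpr fun ij h h' => by
      simp only [entrySupport, mem_filter, mem_univ, true_and] at h h'
      exact hk (hdisj k k' ij.1 ij.2 h h')
  calc ∑ k, ‖frobInner (A k) M‖ ^ 2 * specNorm (A k) ^ 2
      ≤ ∑ k, s⁻¹ * ∑ ij ∈ entrySupport (A k), ‖M ij.1 ij.2‖ ^ 2 := by
        refine sum_le_sum fun k _ => ?_
        have hk := norm_frobInner_sq_mul_specNorm_sq_le (hval k) (hrow k) (hcol k) M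
        rwa [hwrap k] at hk
    _ ≤ s⁻¹ * ∑ ij : Fin n1 × Fin n2, ‖M ij.1 ij.2‖ ^ 2 := by
        rw [← mul_sum, ← sum_biUnion hsupp]
        gcongr
        exact subset_univ _
    _ ≤ s⁻¹ * (s * R) := by gcongr; exact sum_norm_sq_le_min_mul_max M
    _ ≤ R := by
        rw [← mul_assoc]
        exact mul_le_of_le_one_left hR (inv_mul_le_one_of_le₀ le_rfl (by positivity))

/-- For a basis family with the wrap-around property, for all `M`,
`∑_k |⟨A_k, M⟩|²·‖A_k‖² ≤ max(max_i ‖e_iᴴM‖₂², max_j ‖Me_j‖₂²)`. -/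
theorem wraparound_basis_A2_norm_bound
    (n1 n2 n : ℕ)
    (A : Fin n → Matrix (Fin n1) (Fin n2) ℂ)
    (hval : ∀ k i j, A k i j ≠ 0 → A k i j = (((Real.sqrt (nnz (A k)))⁻¹ : ℝ) : ℂ))
    (hrow : ∀ k i j j', A k i j ≠ 0 → A k i j' ≠ 0 → j = j')
    (hcol : ∀ k i i' j, A k i j ≠ 0 → A k i' j ≠ 0 → i = i')
    (hdisj : ∀ k k' i j, A k i j ≠ 0 → A k' i j ≠ 0 → k = k')
    (hcover : ∀ i j, ∃ k, A k i j ≠ 0)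
    (hwrap : ∀ k, nnz (A k) = min n1 n2) :
    ∀ M : Matrix (Fin n1) (Fin n2) ℂ,
      ∑ k, ‖frobInner (A k) M‖ ^ 2 * specNorm (A k) ^ 2 ≤
        max (⨆ i, ∑ j, ‖M i j‖ ^ 2) (⨆ j, ∑ i, ‖M i j‖ ^ 2) :=
  wraparound_basis_A2_norm_bound_general n1 n2 n A hval hrow hcol hdisj hwrap
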